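/- Let f be a perfect k-coloring of a finite regular graph of degree r whose quotient matrix has only two eigenvalues r and θ, let g be a perfect 2-coloring of the same graph whose quotient matrix also has only the eigenvalues r and θ, and suppose that the map h(x) = (f(x), g(x)) takes exactly k+1 distinct values. Then h is a perfect (k+1)-coloring whose quotient matrix has only the two eigenvalues r and θ. -/

import Mathlib

/-- The Hamming graph `H(n, α)`: vertices are words of length `n` over `α`,
adjacent iff they differ in exactly one coordinate. -/
def HammingGraph (n : ℕ) (α : Type*) [DecidableEq α] : SimpleGraph (Fin n → α) where
  Adj x y := hammingDist x y = 1
  symm := ⟨fun x y h => by rwa [hammingDist_comm]⟩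
  loopless := ⟨fun x h => by simp only [hammingDist_self] at h; exact absurd h (by omega)⟩

instance {n : ℕ} {α : Type*} [DecidableEq α] : DecidableRel (HammingGraph n α).Adj :=
  fun x y => inferInstanceAs (Decidable (hammingDist x y = 1))

/-- `f` is a perfect coloring of `G` with quotient matrix `S`: every vertex of
color `i` has exactly `S i j` neighbors of color `j`. -/
def IsPerfectColoring {V K : Type*} [Fintype V] [DecidableEq K] (G : SimpleGraph V)
    [DecidableRel G.Adj] (f : V → K) (S : K → K → ℕ) : Prop :=
  ∀ x : V, ∀ j : K, (Finset.univ.filter (fun y => G.Adj x y ∧ f y = j)).card = S (f x) j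

/-- A function on words depends essentially on its `k`-th argument. -/
def EssentialDep {α K : Type*} {n : ℕ} (f : (Fin n → α) → K) (k : Fin n) : Prop :=
  ∃ x y : Fin n → α, (∀ t, t ≠ k → x t = y t) ∧ f x ≠ f y

/-!
The characteristic functions of the colours of `f` span the space `colorSpace f` of functions
constant on the colour classes; `f` is perfect exactly when this space is invariant under the
adjacency operator `A`, and then `A` restricted to it is conjugate to the quotient matrix. As `A` is
symmetric, the quotient matrix has spectrum in `{r, θ}` iff `(A - r)(A - θ)` vanishes on
`colorSpace f`. Since `h = (f, g)` takes `k + 1` values, some colour class of `f` is split by `g`,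
so `colorSpace f ⊔ colorSpace g`, contained in `colorSpace h`, has dimension at least `k + 1` and
hence equals it. Both the invariance under `A` and the vanishing of `(A - r)(A - θ)` pass to this sum.
-/

open Finset Module Polynomial
open scoped Matrix

theorem Submodule.sup_eq_of_not_le_of_finrank_eq_succ {R E : Type*} [DivisionRing R]
    [AddCommGroup E] [Module R E] [FiniteDimensional R E] {W₁ W₂ W : Submodule R E}
    (h₁ : W₁ ≤ W) (h₂ : W₂ ≤ W) (h₂₁ : ¬W₂ ≤ W₁) (hW : finrank R W = finrank R W₁ + 1) :
    W₁ ⊔ W₂ = W := by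
  refine Submodule.eq_of_le_of_finrank_le (sup_le h₁ h₂) ?_
  rw [hW, Nat.add_one_le_iff]
  exact Submodule.finrank_lt_finrank_of_lt (left_lt_sup.mpr h₂₁)

theorem LinearMap.IsSymmetric.le_ker_aeval {𝕜 E : Type*} [RCLike 𝕜] [NormedAddCommGroup E]
    [InnerProductSpace 𝕜 E] [FiniteDimensional 𝕜 E] {T : E →ₗ[𝕜] E} (hT : T.IsSymmetric)
    {W : Submodule 𝕜 E} (hW : W ∈ End.invtSubmodule T) {p : 𝕜[X]}
    (hp : ∀ μ v, v ∈ W → End.HasEigenvector T μ v → p.IsRoot μ) :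
    W ≤ LinearMap.ker (aeval T p) := by
  have hinv := (End.mem_invtSubmodule_iff_forall_mem_of_mem T).mp hW
  have hTW := hT.restrict_invariant hinv
  suffices aeval T p ∘ₗ W.subtype = 0 from fun v hv => congr($this ⟨v, hv⟩)
  refine (hTW.eigenvectorBasis rfl).toBasis.ext fun i => ?_
  have hb := hTW.hasEigenvector_eigenvectorBasis rfl i
  have hbT : End.HasEigenvector T _ (hTW.eigenvectorBasis rfl i : E) :=
    ⟨End.mem_eigenspace_iff.mpr congr(Subtype.val $(End.mem_eigenspace_iff.mp hb.1)),
      by simpa using hb.2⟩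
  simp [End.aeval_apply_of_hasEigenvector hbT,
    (hp _ _ (hTW.eigenvectorBasis rfl i).2 hbT).eq_zero]

section ColorSpace

variable {V K L : Type*}

noncomputable def colorLift (f : V → K) : (K → ℝ) →ₗ[ℝ] EuclideanSpace ℝ V :=
  (WithLp.linearEquiv 2 ℝ (V → ℝ)).symm.toLinearMap ∘ₗ LinearMap.funLeft ℝ ℝ f

@[simp]
theorem colorLift_apply (f : V → K) (c : K → ℝ) (x : V) : colorLift f c x = c (f x) := rfl

theorem colorLift_injective {f : V → K} (hf : Function.Surjective f) :
    Function.Injective (colorLift f) :=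
  (WithLp.linearEquiv 2 ℝ (V → ℝ)).symm.injective.comp
    (LinearMap.funLeft_injective_of_surjective _ _ f hf)

noncomputable def colorSpace (f : V → K) : Submodule ℝ (EuclideanSpace ℝ V) :=
  LinearMap.range (colorLift f)

theorem colorSpace_comp_le (φ : L → K) (h : V → L) : colorSpace (φ ∘ h) ≤ colorSpace h := by
  rintro _ ⟨c, rfl⟩
  exact ⟨c ∘ φ, rfl⟩

theorem eq_of_colorSpace_le {f : V → K} {g : V → L} (hle : colorSpace g ≤ colorSpace f) {x y : V}
    (hxy : f x = f y) : g x = g y := by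
  classical
  obtain ⟨d, hd⟩ := hle ⟨fun l => if l = g x then 1 else 0, rfl⟩
  have hx := congr($hd x)
  have hy := congr($hd y)
  simp only [colorLift_apply, hxy, if_pos] at hx hy
  by_contra hne
  simp [hx, Ne.symm hne] at hy

theorem exists_eq_ne_of_card_lt_card_image [Fintype V] [Fintype K] [DecidableEq K] [DecidableEq L]
    {f : V → K} {g : V → L} (hcard : Fintype.card K < #(univ.image fun x => (f x, g x))) :
    ∃ x y, f x = f y ∧ g x ≠ g y := by
  obtain ⟨_, hp, _, hq, hpq, hfst⟩ := exists_ne_map_eq_of_card_lt_of_maps_to (t := univ)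
    (f := (Prod.fst : K × L → K)) (by rwa [card_univ]) fun p _ => mem_univ p.1
  obtain ⟨x, -, rfl⟩ := mem_image.mp hp
  obtain ⟨y, -, rfl⟩ := mem_image.mp hq
  exact ⟨x, y, hfst, fun hg => hpq (Prod.ext hfst hg)⟩

theorem finrank_colorSpace [Fintype K] {f : V → K} (hf : Function.Surjective f) :
    finrank ℝ (colorSpace f) = Fintype.card K :=
  (LinearMap.finrank_range_of_inj (colorLift_injective hf)).trans (finrank_fintype_fun_eq_card ℝ)

end ColorSpace

section AdjacencyOperator

variable {V K : Type*} [Fintype V] [DecidableEq V] (G : SimpleGraph V) [DecidableRel G.Adj]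

noncomputable def adjEnd : End ℝ (EuclideanSpace ℝ V) :=
  Matrix.toEuclideanLin (G.adjMatrix ℝ)

theorem isSymmetric_adjEnd : (adjEnd G).IsSymmetric :=
  Matrix.isSymmetric_toEuclideanLin_iff.mpr (G.isHermitian_adjMatrix ℝ)

variable {G}

theorem adjEnd_colorLift_apply [Fintype K] [DecidableEq K] (f : V → K) (c : K → ℝ) (x : V) :
    adjEnd G (colorLift f c) x = ∑ j, #{y | G.Adj x y ∧ f y = j} * c j := by
  change (G.adjMatrix ℝ *ᵥ fun y => c (f y)) x = _
  rw [G.adjMatrix_mulVec_apply, ← sum_fiberwise (G.neighborFinset x) f]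
  refine sum_congr rfl fun j _ => ?_
  rw [sum_congr rfl fun y hy => by rw [(mem_filter.mp hy).2], sum_const, nsmul_eq_mul,
    G.neighborFinset_eq_filter, filter_filter]

theorem exists_isPerfectColoring_of_mem_invtSubmodule [Fintype K] [DecidableEq K] {f : V → K}
    (hinv : colorSpace f ∈ End.invtSubmodule (adjEnd G)) :
    ∃ S, IsPerfectColoring G f S := by
  have hmem (j : K) : adjEnd G (colorLift f (Pi.single j 1)) ∈ colorSpace f :=
    (End.mem_invtSubmodule_iff_forall_mem_of_mem _).mp hinv _ ⟨_, rfl⟩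
  choose d hd using hmem
  refine ⟨fun i j => ⌊d j i⌋₊, fun x j => ?_⟩
  have hx := congr($(hd j) x)
  simp only [colorLift_apply, adjEnd_colorLift_apply, Pi.single_apply, mul_ite, mul_one,
    mul_zero, sum_ite_eq', mem_univ, if_true] at hx
  simp [hx]

end AdjacencyOperator

namespace IsPerfectColoring

variable {V K : Type*} [Fintype V] [DecidableEq V] [Fintype K] [DecidableEq K] {G : SimpleGraph V}
  [DecidableRel G.Adj] {f : V → K} {S : K → K → ℕ}

theorem adjEnd_colorLift (hf : IsPerfectColoring G f S) (c : K → ℝ) :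
    adjEnd G (colorLift f c) = colorLift f ((Matrix.of fun i j => (S i j : ℝ)) *ᵥ c) := by
  ext x
  simp [adjEnd_colorLift_apply, Matrix.mulVec, dotProduct, hf x]

theorem colorSpace_mem_invtSubmodule (hf : IsPerfectColoring G f S) :
    colorSpace f ∈ End.invtSubmodule (adjEnd G) := by
  rw [End.mem_invtSubmodule]
  rintro _ ⟨c, rfl⟩
  exact ⟨_, (hf.adjEnd_colorLift c).symm⟩

theorem mem_spectrum_of_hasEigenvector (hf : IsPerfectColoring G f S)
    (hfs : Function.Surjective f) {μ : ℝ} {v : EuclideanSpace ℝ V} (hv : v ∈ colorSpace f)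
    (hμ : (adjEnd G).HasEigenvector μ v) :
    μ ∈ spectrum ℝ (Matrix.of fun i j => (S i j : ℝ)) := by
  obtain ⟨c, rfl⟩ := hv
  rw [← Matrix.spectrum_toLin', ← End.hasEigenvalue_iff_mem_spectrum]
  refine End.hasEigenvalue_of_hasEigenvector (x := c) ⟨?_, fun hc => hμ.2 (by simp [hc])⟩
  apply End.mem_eigenspace_iff.mpr (colorLift_injective hfs _)
  rw [Matrix.toLin'_apply, ← hf.adjEnd_colorLift, End.mem_eigenspace_iff.mp hμ.1, map_smul]

theorem exists_hasEigenvector_of_mem_spectrum (hf : IsPerfectColoring G f S)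
    (hfs : Function.Surjective f) {μ : ℝ} (hμ : μ ∈ spectrum ℝ (Matrix.of fun i j => (S i j : ℝ))) :
    ∃ v ∈ colorSpace f, (adjEnd G).HasEigenvector μ v := by
  rw [← Matrix.spectrum_toLin', ← End.hasEigenvalue_iff_mem_spectrum] at hμ
  obtain ⟨c, hc⟩ := hμ.exists_hasEigenvector
  refine ⟨colorLift f c, ⟨c, rfl⟩, End.mem_eigenspace_iff.mpr ?_, ?_⟩
  · rw [hf.adjEnd_colorLift, ← Matrix.toLin'_apply, End.mem_eigenspace_iff.mp hc.1,
      map_smul]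
  · exact (map_ne_zero_iff _ (colorLift_injective hfs)).mpr hc.2

theorem colorSpace_le_ker_aeval (hf : IsPerfectColoring G f S) (hfs : Function.Surjective f)
    {p : ℝ[X]} (hp : ∀ μ ∈ spectrum ℝ (Matrix.of fun i j => (S i j : ℝ)), p.IsRoot μ) :
    colorSpace f ≤ LinearMap.ker (aeval (adjEnd G) p) :=
  (isSymmetric_adjEnd G).le_ker_aeval hf.colorSpace_mem_invtSubmodule fun _ _ hv hμ =>
    hp _ (hf.mem_spectrum_of_hasEigenvector hfs hv hμ)

theorem isRoot_of_mem_spectrum (hf : IsPerfectColoring G f S) (hfs : Function.Surjective f)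
    {p : ℝ[X]} (hker : colorSpace f ≤ LinearMap.ker (aeval (adjEnd G) p)) {μ : ℝ}
    (hμ : μ ∈ spectrum ℝ (Matrix.of fun i j => (S i j : ℝ))) : p.IsRoot μ := by
  obtain ⟨v, hv, hμv⟩ := hf.exists_hasEigenvector_of_mem_spectrum hfs hμ
  have hpv := hker hv
  rw [LinearMap.mem_ker, End.aeval_apply_of_hasEigenvector hμv, smul_eq_zero] at hpv
  exact hpv.resolve_right hμv.2

end IsPerfectColoring

theorem stmt19_general {V K : Type*} [Fintype V] [DecidableEq V] [Fintype K] [DecidableEq K]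
    (G : SimpleGraph V) [DecidableRel G.Adj] (r : ℕ)
    (θ : ℝ)
    (f : V → K) (hfs : Function.Surjective f) (S : K → K → ℕ)
    (hf : IsPerfectColoring G f S)
    (hfspec : spectrum ℝ (Matrix.of fun i j : K => (S i j : ℝ)) = {(r : ℝ), θ})
    (g : V → Fin 2) (hgs : Function.Surjective g) (S₂ : Fin 2 → Fin 2 → ℕ)
    (hg : IsPerfectColoring G g S₂)
    (hgspec : spectrum ℝ (Matrix.of fun i j : Fin 2 => (S₂ i j : ℝ)) = {(r : ℝ), θ})
    (hcard : (Finset.univ.image fun x : V => (f x, g x)).card = Fintype.card K + 1) :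
    ∃ S' : ↥(Finset.univ.image fun x : V => (f x, g x))
        → ↥(Finset.univ.image fun x : V => (f x, g x)) → ℕ,
      IsPerfectColoring G
        (fun x => (⟨(f x, g x), Finset.mem_image_of_mem _ (Finset.mem_univ x)⟩ :
          ↥(Finset.univ.image fun x : V => (f x, g x)))) S' ∧
      spectrum ℝ (Matrix.of fun i j => ((S' i j : ℕ) : ℝ)) ⊆ {(r : ℝ), θ} := by
  obtain ⟨x, y, hfxy, hgxy⟩ := exists_eq_ne_of_card_lt_card_image (f := f) (g := g) (by omega)
  set I := univ.image fun x : V => (f x, g x)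
  set h : V → I := fun x => ⟨(f x, g x), mem_image_of_mem _ (mem_univ x)⟩
  have hhs : Function.Surjective h := by
    rintro ⟨_, hp⟩
    obtain ⟨x, -, rfl⟩ := mem_image.mp hp
    exact ⟨x, rfl⟩
  have hsup : colorSpace f ⊔ colorSpace g = colorSpace h :=
    Submodule.sup_eq_of_not_le_of_finrank_eq_succ (colorSpace_comp_le (Prod.fst ∘ Subtype.val) h)
      (colorSpace_comp_le (Prod.snd ∘ Subtype.val) h)
      (fun hle => hgxy (eq_of_colorSpace_le hle hfxy))
      (by rw [finrank_colorSpace hhs, finrank_colorSpace hfs, Fintype.card_coe, hcard])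
  obtain ⟨S', hS'⟩ := exists_isPerfectColoring_of_mem_invtSubmodule
    (hsup ▸ Sublattice.sup_mem hf.colorSpace_mem_invtSubmodule hg.colorSpace_mem_invtSubmodule)
  refine ⟨S', hS', fun μ hμ => ?_⟩
  set p : ℝ[X] := (X - C (r : ℝ)) * (X - C θ)
  have hroot (μ : ℝ) : p.IsRoot μ ↔ μ ∈ ({(r : ℝ), θ} : Set ℝ) := by
    simp [p, sub_eq_zero]
  have hker : colorSpace h ≤ LinearMap.ker (aeval (adjEnd G) p) :=
    hsup ▸ sup_le (hf.colorSpace_le_ker_aeval hfs fun μ hμ => (hroot μ).mpr (hfspec ▸ hμ))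
      (hg.colorSpace_le_ker_aeval hgs fun μ hμ => (hroot μ).mpr (hgspec ▸ hμ))
  exact (hroot μ).mp (hS'.isRoot_of_mem_spectrum hhs hker hμ)

/-- If `f` is a perfect `k`-coloring and `g` a perfect 2-coloring of an `r`-regular
graph, both with quotient matrices having only the eigenvalues `r` and `θ`, and
`h(x) = (f x, g x)` takes exactly `k+1` values, then `h` is a perfect `(k+1)`-coloring
whose quotient matrix has only the eigenvalues `r` and `θ`. -/
theorem stmt19 {V K : Type*} [Fintype V] [DecidableEq V] [Fintype K] [DecidableEq K]
    (G : SimpleGraph V) [DecidableRel G.Adj] (r : ℕ) (hreg : G.IsRegularOfDegree r)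
    (θ : ℝ)
    (f : V → K) (hfs : Function.Surjective f) (S : K → K → ℕ)
    (hf : IsPerfectColoring G f S)
    (hfspec : spectrum ℝ (Matrix.of fun i j : K => (S i j : ℝ)) = {(r : ℝ), θ})
    (g : V → Fin 2) (hgs : Function.Surjective g) (S₂ : Fin 2 → Fin 2 → ℕ)
    (hg : IsPerfectColoring G g S₂)
    (hgspec : spectrum ℝ (Matrix.of fun i j : Fin 2 => (S₂ i j : ℝ)) = {(r : ℝ), θ})
    (hcard : (Finset.univ.image fun x : V => (f x, g x)).card = Fintype.card K + 1) :
    ∃ S' : ↥(Finset.univ.image fun x : V => (f x, g x))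
        → ↥(Finset.univ.image fun x : V => (f x, g x)) → ℕ,
      IsPerfectColoring G
        (fun x => (⟨(f x, g x), Finset.mem_image_of_mem _ (Finset.mem_univ x)⟩ :
          ↥(Finset.univ.image fun x : V => (f x, g x)))) S' ∧
      spectrum ℝ (Matrix.of fun i j => ((S' i j : ℕ) : ℝ)) ⊆ {(r : ℝ), θ} :=
  stmt19_general G r θ f hfs S hf hfspec g hgs S₂ hg hgspec hcard
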